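/- arXiv:2104.04583 — 2 statements merged into one kernel-verified Lean document; each statement's English description precedes it below -/
import Mathlib

section
/- There is no nondegenerate integral lattice L of signature (1,n) containing vectors h, ε, v₁, …, v₆ such that h² = 8, ε² = −2, ε·h = 0, vᵢ² = −2, vᵢ·h = 1, ε·vᵢ = 1 for all i, and vᵢ·vⱼ = 0 for all i ≠ j. -/
open Matrix

/-- The bilinear form `B` is symmetric. -/
def IsSymmBilin {L : Type*} [AddCommGroup L] [Module ℤ L]
    (B : L →ₗ[ℤ] L →ₗ[ℤ] ℤ) : Prop := ∀ x y : L, B x y = B y x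

/-- The integral lattice `(L, B)` is nondegenerate of signature `(1, n)`:
it is free of rank `n + 1` and its real Gram matrix is congruent to
`diag(1, -1, …, -1)`. -/
def HasSigOneN {L : Type*} [AddCommGroup L] [Module ℤ L]
    (B : L →ₗ[ℤ] L →ₗ[ℤ] ℤ) (n : ℕ) : Prop :=
  ∃ b : Module.Basis (Fin (n + 1)) ℤ L, ∃ P : Matrix (Fin (n + 1)) (Fin (n + 1)) ℝ,
    IsUnit P.det ∧
      P.transpose * (Matrix.of fun i j => ((B (b i) (b j) : ℤ) : ℝ)) * P =
        Matrix.diagonal (fun i => if i = 0 then (1 : ℝ) else -1)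

/-- The Gram matrix of a triple of vectors. -/
def gram3 {L : Type*} [AddCommGroup L] [Module ℤ L]
    (B : L →ₗ[ℤ] L →ₗ[ℤ] ℤ) (x y z : L) : Matrix (Fin 3) (Fin 3) ℤ :=
  !![B x x, B x y, B x z; B y x, B y y, B y z; B z x, B z y, B z z]

/-!
A form of signature `(1, n)` has a single positive direction, so it is negative semidefinite on
`x^⊥` whenever `x² > 0`. Projecting `y` and `z` to `x^⊥` (as `x² y - (x·y) x`, to stay integral)
and applying Cauchy–Schwarz there shows that a Gram determinant `det G(x, y, z)` with `x² > 0` is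
nonnegative. But `h, ε, v₁ + ⋯ + v₆` have Gram matrix `[[8, 0, 6], [0, -2, 6], [6, 6, -12]]`,
of determinant `-24`.
-/

theorem sq_le_mul_of_orthogonal {R M : Type*} [CommRing R] [LinearOrder R] [IsStrictOrderedRing R]
    [AddCommGroup M] [Module R M] {B : M →ₗ[R] M →ₗ[R] R} (hsymm : ∀ x y, B x y = B y x)
    (hB : ∀ x y, 0 < B x x → B x y = 0 → B y y ≤ 0) {x y z : M} (hx : 0 < B x x)
    (hy : B x y = 0) (hz : B x z = 0) : B y z ^ 2 ≤ B y y * B z z := by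
  have quad : ∀ p q : R, p ^ 2 * B y y + 2 * p * q * B y z + q ^ 2 * B z z ≤ 0 := fun p q => by
    have := hB x (p • y + q • z) hx (by simp [hy, hz])
    simp only [map_add, map_smul, LinearMap.add_apply, LinearMap.smul_apply, smul_eq_mul,
      hsymm z y] at this
    linear_combination this
  have hyy := quad 1 0
  have hzz := quad 0 1
  -- At `(D, -C)` the form takes the value `D (D A - C²)`; if `D = 0`, at `(C, 1 - A)` it is
  -- `C² (2 - A)` (with `A, C, D = B y y, B y z, B z z`).
  rcases hzz.lt_or_eq with hzz | hzz
  · nlinarith [quad (B z z) (-B y z)]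
  · nlinarith [quad (B y z) (1 - B y y)]

theorem det_gram3_nonneg {L : Type*} [AddCommGroup L] [Module ℤ L] {B : L →ₗ[ℤ] L →ₗ[ℤ] ℤ}
    (hsymm : IsSymmBilin B) (hB : ∀ x y, 0 < B x x → B x y = 0 → B y y ≤ 0) {x : L}
    (hx : 0 < B x x) (y z : L) : 0 ≤ (gram3 B x y z).det := by
  have key := sq_le_mul_of_orthogonal hsymm hB hx (y := B x x • y - B x y • x)
    (z := B x x • z - B x z • x) (by simp; ring) (by simp; ring)
  simp only [map_sub, LinearMap.map_smul_of_tower, LinearMap.sub_apply, LinearMap.smul_apply,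
    Int.zsmul_eq_mul, hsymm y x, hsymm z x] at key
  have hcs : (B x x * B y z - B x y * B x z) ^ 2 ≤
      (B x x * B y y - B x y ^ 2) * (B x x * B z z - B x z ^ 2) := by
    refine le_of_mul_le_mul_left ?_ (pow_pos hx 2)
    linear_combination key
  have hdet : B x x * (gram3 B x y z).det =
      (B x x * B y y - B x y ^ 2) * (B x x * B z z - B x z ^ 2) -
        (B x x * B y z - B x y * B x z) ^ 2 := by
    simp only [gram3, det_fin_three, of_apply, cons_val', cons_val_zero, cons_val_fin_one,
      cons_val_one, cons_val, hsymm y x, hsymm z x, hsymm z y]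
    ring
  exact (mul_nonneg_iff_of_pos_left hx).mp (hdet ▸ sub_nonneg.mpr hcs)

def minkowski {n : ℕ} (u w : Fin (n + 1) → ℝ) : ℝ :=
  u 0 * w 0 - Fin.tail u ⬝ᵥ Fin.tail w

theorem minkowski_self_nonpos_of_orthogonal {n : ℕ} {u w : Fin (n + 1) → ℝ}
    (hu : 0 < minkowski u u) (huw : minkowski u w = 0) : minkowski w w ≤ 0 := by
  have hcs := Finset.sum_mul_sq_le_sq_mul_sq Finset.univ (Fin.tail u) (Fin.tail w)
  have hSu : 0 ≤ ∑ i, Fin.tail u i ^ 2 := by positivity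
  have hSw : 0 ≤ ∑ i, Fin.tail w i ^ 2 := by positivity
  simp only [minkowski, dotProduct, ← sq] at hu huw ⊢
  rw [← sub_eq_zero.mp huw] at hcs
  by_contra! hw
  nlinarith [mul_le_mul_of_nonneg_right (sub_pos.mp hu).le hSw,
    mul_lt_mul_of_pos_left (sub_pos.mp hw) (hSu.trans_lt (sub_pos.mp hu))]

theorem dotProduct_mulVec_eq_of_transpose_mul_mul_eq {ι R : Type*} [Fintype ι] [DecidableEq ι]
    [CommRing R] {G D P : Matrix ι ι R} (hP : IsUnit P.det) (hD : Pᵀ * G * P = D)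
    (u w : ι → R) : u ⬝ᵥ G *ᵥ w = (P⁻¹ *ᵥ u) ⬝ᵥ D *ᵥ (P⁻¹ *ᵥ w) := by
  rw [← hD, ← mulVec_mulVec, ← mulVec_mulVec, dotProduct_mulVec (P⁻¹ *ᵥ u), vecMul_transpose]
  simp only [mulVec_mulVec, mul_nonsing_inv P hP, one_mulVec]

theorem dotProduct_diagonal_mulVec_eq_minkowski {n : ℕ} (u w : Fin (n + 1) → ℝ) :
    u ⬝ᵥ diagonal (fun i => if i = 0 then (1 : ℝ) else -1) *ᵥ w = minkowski u w := by
  simp [minkowski, dotProduct, Fin.sum_univ_succ, Fin.tail, mulVec_diagonal, Fin.succ_ne_zero,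
    sub_eq_add_neg]

theorem HasSigOneN.exists_minkowski_coords {L : Type*} [AddCommGroup L] [Module ℤ L]
    {B : L →ₗ[ℤ] L →ₗ[ℤ] ℤ} {n : ℕ} (hB : HasSigOneN B n) :
    ∃ φ : L → Fin (n + 1) → ℝ, ∀ x y, (B x y : ℝ) = minkowski (φ x) (φ y) := by
  obtain ⟨b, P, hP, hD⟩ := hB
  refine ⟨fun x => P⁻¹ *ᵥ (Int.cast ∘ b.repr x), fun x y => ?_⟩
  have hG : (of fun i j => ((B (b i) (b j) : ℤ) : ℝ)) =
      (LinearMap.toMatrix₂ b b B).map Int.cast := by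
    ext i j; simp [LinearMap.toMatrix₂_apply]
  rw [← dotProduct_diagonal_mulVec_eq_minkowski,
    ← dotProduct_mulVec_eq_of_transpose_mul_mul_eq hP hD,
    apply_eq_dotProduct_toMatrix₂_mulVec b b B x y, hG]
  push_cast [RingHom.coe_id, Function.id_comp, dotProduct, mulVec]
  rfl

theorem HasSigOneN.self_nonpos_of_orthogonal {L : Type*} [AddCommGroup L] [Module ℤ L]
    {B : L →ₗ[ℤ] L →ₗ[ℤ] ℤ} {n : ℕ} (hB : HasSigOneN B n) (x y : L) (hx : 0 < B x x)
    (hxy : B x y = 0) : B y y ≤ 0 := by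
  obtain ⟨φ, hφ⟩ := hB.exists_minkowski_coords
  have := minkowski_self_nonpos_of_orthogonal (u := φ x) (w := φ y)
    (by rw [← hφ]; exact_mod_cast hx) (by rw [← hφ, hxy, Int.cast_zero])
  rw [← hφ] at this
  exact_mod_cast this

theorem stmt14 :
    ∀ (L : Type) (_ : AddCommGroup L) (_ : Module ℤ L)
      (n : ℕ) (B : L →ₗ[ℤ] L →ₗ[ℤ] ℤ),
      IsSymmBilin B → HasSigOneN B n →
      ∀ (h ε : L) (v : Fin 6 → L),
        B h h = 8 → B ε ε = -2 → B ε h = 0 →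
        (∀ i, B (v i) (v i) = -2) → (∀ i, B (v i) h = 1) →
        (∀ i, B ε (v i) = 1) →
        (∀ i j, i ≠ j → B (v i) (v j) = 0) → False := by
  intro L _ _ n B hsymm hsig h ε v hhh hεε hεh hvv hvh hεv hvv'
  set s := ∑ i, v i with hs
  have hsh : B s h = 6 := by simp [s, hvh]
  have hεs : B ε s = 6 := by simp [s, hεv]
  have hsv : ∀ i, B s (v i) = -2 := fun i => by
    rw [hs, map_sum, LinearMap.sum_apply,
      Finset.sum_eq_single i (fun j _ hji => hvv' j i hji) (by simp), hvv]
  have hss : B s s = -12 := by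
    rw [show B s s = ∑ i, B s (v i) from map_sum (B s) v Finset.univ]
    simp [hsv]
  have hdet : (gram3 B h ε s).det = -24 := by
    simp only [gram3, det_fin_three, of_apply, cons_val', cons_val_zero, cons_val_fin_one,
      cons_val_one, cons_val, hsymm h ε, hsymm h s, hsymm s ε, hhh, hεε, hεh, hsh, hεs, hss]
    norm_num
  have := det_gram3_nonneg hsymm hsig.self_nonpos_of_orthogonal (x := h) (by omega) ε s
  omega
end

section
/- Let L be a nondegenerate integral lattice of signature (1,n) containing h with h² = 8 and sixteen vectors f₁, …, f₁₆ with fᵢ² = −2, fᵢ·h = 1, and fᵢ·fⱼ = 0 for i ≠ j. Suppose ι ∈ L satisfies ι² = 0, ι·h = 3, and ι·fᵢ ∈ {0,1} for each i. Then #{ i : ι·fᵢ = 1 } ≤ 2. -/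
/-!
Signature `(1, n)` gives a reverse Cauchy–Schwarz inequality `h² v² ≤ (v·h)²` for every `v`
once `h² > 0`. With `A = {i : ι·fᵢ = 1}`, `k = #A`, `F_A = ∑_{i ∈ A} fᵢ` and `F = ∑ fᵢ`, take
`v = 64 ι + 32 F_A − (k + 6) F`; modulo `h` this is `64` times the component of `ι` orthogonal to
`span(h, f₁, …, f₁₆)`. Then `v·h = 16 (k + 6)` and the inequality becomes
`512 (k² − 20k + 36) ≥ 0`, i.e. `(k − 2)(k − 18) ≥ 0`, which for `k ≤ 16` forces `k ≤ 2`.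
-/

open Matrix

open Finset

theorem dotProduct_diagonal_one_neg_one {n : ℕ} (a c : Fin (n + 1) → ℝ) :
    a ⬝ᵥ diagonal (fun i => if i = 0 then (1 : ℝ) else -1) *ᵥ c =
      a 0 * c 0 - ∑ i : Fin n, a i.succ * c i.succ := by
  simp [dotProduct, mulVec_diagonal, Fin.sum_univ_succ, sub_eq_add_neg]

theorem minkowski_nonpos_of_orthogonal {n : ℕ} (a c : Fin (n + 1) → ℝ)
    (ha : 0 < a ⬝ᵥ diagonal (fun i => if i = 0 then (1 : ℝ) else -1) *ᵥ a)
    (hac : a ⬝ᵥ diagonal (fun i => if i = 0 then (1 : ℝ) else -1) *ᵥ c = 0) :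
    c ⬝ᵥ diagonal (fun i => if i = 0 then (1 : ℝ) else -1) *ᵥ c ≤ 0 := by
  simp only [dotProduct_diagonal_one_neg_one] at *
  have hcs := sum_mul_sq_le_sq_mul_sq univ (fun i : Fin n => a i.succ) (fun i => c i.succ)
  have hS : 0 ≤ ∑ i : Fin n, a i.succ ^ 2 := sum_nonneg fun i _ => sq_nonneg _
  have hT : 0 ≤ ∑ i : Fin n, c i.succ ^ 2 := sum_nonneg fun i _ => sq_nonneg _
  simp only [sq] at hcs hS hT
  generalize ∑ i : Fin n, a i.succ * a i.succ = S at *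
  generalize ∑ i : Fin n, c i.succ * c i.succ = T at *
  generalize ∑ i : Fin n, a i.succ * c i.succ = X at *
  obtain rfl : X = a 0 * c 0 := by linarith
  by_contra! hc
  have ha' : S < a 0 * a 0 := by linarith
  have hc' : T < c 0 * c 0 := by linarith
  nlinarith [mul_le_mul_of_nonneg_right ha'.le hT, mul_lt_mul_of_pos_left hc' (hS.trans_lt ha')]

theorem dotProduct_transpose_mul_mul_mulVec {m R : Type*} [Fintype m] [CommSemiring R]
    (G P : Matrix m m R) (x y : m → R) :
    x ⬝ᵥ (Pᵀ * G * P) *ᵥ y = (P *ᵥ x) ⬝ᵥ G *ᵥ (P *ᵥ y) := by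
  rw [← mulVec_mulVec, ← mulVec_mulVec, dotProduct_mulVec, vecMul_transpose]

section Lattice

variable {L : Type*} [AddCommGroup L] [Module ℤ L]

theorem cast_apply_eq_dotProduct_mulVec {m : Type*} [Fintype m] [DecidableEq m]
    (B : L →ₗ[ℤ] L →ₗ[ℤ] ℤ) (b : Module.Basis m ℤ L) (x y : L) :
    ((B x y : ℤ) : ℝ) = (fun i => (b.repr x i : ℝ)) ⬝ᵥ
      (of fun i j => (B (b i) (b j) : ℝ)) *ᵥ (fun j => (b.repr y j : ℝ)) := by
  have := dotProduct_toMatrix₂_mulVec b b B (b.repr x) (b.repr y)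
  simp only [Module.Basis.equivFun_symm_apply, Module.Basis.sum_repr] at this
  rw [← this]
  simp [dotProduct, mulVec, LinearMap.toMatrix₂_apply]

theorem HasSigOneN.apply_eq_minkowski {B : L →ₗ[ℤ] L →ₗ[ℤ] ℤ} {n : ℕ}
    (hsig : HasSigOneN B n) :
    ∃ e : L → Fin (n + 1) → ℝ, ∀ x y, ((B x y : ℤ) : ℝ) =
      e x ⬝ᵥ diagonal (fun i => if i = 0 then (1 : ℝ) else -1) *ᵥ e y := by
  obtain ⟨b, P, hP, hcong⟩ := hsig
  refine ⟨fun x => P⁻¹ *ᵥ fun i => (b.repr x i : ℝ), fun x y => ?_⟩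
  have hPP : ∀ v, P *ᵥ (P⁻¹ *ᵥ v) = v := fun v => by
    rw [mulVec_mulVec, mul_nonsing_inv P hP, one_mulVec]
  rw [← hcong, dotProduct_transpose_mul_mul_mulVec, hPP, hPP, cast_apply_eq_dotProduct_mulVec B b]

theorem HasSigOneN.apply_self_nonpos_of_orthogonal {B : L →ₗ[ℤ] L →ₗ[ℤ] ℤ} {n : ℕ}
    (hsig : HasSigOneN B n) {u w : L} (hu : 0 < B u u) (huw : B u w = 0) : B w w ≤ 0 := by
  obtain ⟨e, he⟩ := hsig.apply_eq_minkowski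
  have := minkowski_nonpos_of_orthogonal (e u) (e w) (by rw [← he]; exact_mod_cast hu)
    (by rw [← he, huw, Int.cast_zero])
  rw [← he] at this
  exact_mod_cast this

theorem HasSigOneN.apply_self_mul_apply_self_le_sq {B : L →ₗ[ℤ] L →ₗ[ℤ] ℤ} {n : ℕ}
    (hB : IsSymmBilin B) (hsig : HasSigOneN B n) {u : L} (hu : 0 < B u u) (v : L) :
    B u u * B v v ≤ B v u ^ 2 := by
  have := hsig.apply_self_nonpos_of_orthogonal hu (w := B u u • v - B u v • u) (by
    simp only [map_sub, map_zsmul, smul_eq_mul]; ring)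
  simp only [map_sub, map_zsmul, LinearMap.sub_apply, LinearMap.smul_apply, smul_eq_mul,
    hB u v] at this
  nlinarith

theorem apply_sum_sum_of_pairwise {κ : Type*} [DecidableEq κ] (B : L →ₗ[ℤ] L →ₗ[ℤ] ℤ)
    {f : κ → L} (hff : ∀ i j, i ≠ j → B (f i) (f j) = 0) (s t : Finset κ) :
    B (∑ i ∈ s, f i) (∑ j ∈ t, f j) = ∑ i ∈ s ∩ t, B (f i) (f i) := by
  rw [map_sum B f s, LinearMap.sum_apply, ← sum_ite_mem s t]
  refine sum_congr rfl fun i _ => ?_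
  rw [map_sum]
  split_ifs with hi
  · exact sum_eq_single_of_mem i hi fun j _ hji => hff i j hji.symm
  · exact sum_eq_zero fun j hj => hff i j (ne_of_mem_of_not_mem hj hi).symm

end Lattice

theorem stmt16 {L : Type*} [AddCommGroup L] [Module ℤ L]
    (n : ℕ) (B : L →ₗ[ℤ] L →ₗ[ℤ] ℤ)
    (hB : IsSymmBilin B) (hsig : HasSigOneN B n)
    (h : L) (hh : B h h = 8)
    (f : Fin 16 → L)
    (hf : ∀ i, B (f i) (f i) = -2) (hfh : ∀ i, B (f i) h = 1)
    (hff : ∀ i j, i ≠ j → B (f i) (f j) = 0)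
    (ι : L) (hι : B ι ι = 0) (hιh : B ι h = 3)
    (hιf : ∀ i, B ι (f i) = 0 ∨ B ι (f i) = 1) :
    (Finset.univ.filter fun i : Fin 16 => B ι (f i) = 1).card ≤ 2 := by
  set A := univ.filter fun i : Fin 16 => B ι (f i) = 1
  set k := #A
  have hιA : B ι (∑ i ∈ A, f i) = k := by
    rw [map_sum, sum_congr rfl fun i hi => (mem_filter.1 hi).2, sum_const, nsmul_one]
  have hιF : B ι (∑ i, f i) = k := by
    rw [← hιA, map_sum, map_sum, sum_filter_of_ne]
    exact fun i _ hi => (hιf i).resolve_left hi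
  have hAh : B (∑ i ∈ A, f i) h = k := by simp [hfh, k]
  have hFh : B (∑ i, f i) h = 16 := by simp [hfh]
  have hAA : B (∑ i ∈ A, f i) (∑ i ∈ A, f i) = -2 * k := by
    rw [apply_sum_sum_of_pairwise B hff]; simp [hf, k, mul_comm]
  have hAF : B (∑ i ∈ A, f i) (∑ i, f i) = -2 * k := by
    rw [apply_sum_sum_of_pairwise B hff]; simp [hf, k, mul_comm]
  have hFF : B (∑ i, f i) (∑ i, f i) = -32 := by
    rw [apply_sum_sum_of_pairwise B hff]; simp [hf]
  have hcs := hsig.apply_self_mul_apply_self_le_sq hB (u := h) (by rw [hh]; norm_num)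
    ((64 : ℤ) • ι + (32 : ℤ) • ∑ i ∈ A, f i - ((k : ℤ) + 6) • ∑ i, f i)
  simp only [map_add, map_sub, map_zsmul, LinearMap.add_apply, LinearMap.sub_apply,
    LinearMap.smul_apply, smul_eq_mul, hB (∑ i ∈ A, f i) ι, hB (∑ i, f i) ι,
    hB (∑ i, f i) (∑ i ∈ A, f i), hh, hι, hιh, hιA, hιF, hAh, hFh, hAA, hAF, hFF] at hcs
  have hquad : 0 ≤ ((k : ℤ) - 2) * (k - 18) := by nlinarith
  have hk16 : (k : ℤ) ≤ 16 := by exact_mod_cast card_le_univ A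
  have : (k : ℤ) ≤ 2 := by nlinarith
  exact_mod_cast this
end
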